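/- arXiv:1710.01660 — 4 statements merged into one kernel-verified Lean document; each statement's English description precedes it below -/
import Mathlib

section
/- Let X be a compact metric space, φ : X → X continuous, and a_0 ∈ X a point with infinite forward orbit such that the orbit tail {φ^n(a_0) : n ≥ N} is dense in ω_φ(a_0) for all N ≥ N_0. For any sequence (r_n) of positive reals decreasing to 0, the set U_N = (∪_{n ≥ N} {z ∈ ω_φ(a_0) : d(z, φ^n(a_0)) < r_n}) \ {a_0, φ(a_0), …, φ^{N−1}(a_0)} is open and dense in ω_φ(a_0) for each N ≥ N_0, and hence by the Baire category theorem the intersection B = ∩_{N ≥ N_0} U_N is dense in ω_φ(a_0). In particular, if ω_φ(a_0) is nonempty there exists h ∈ ω_φ(a_0) with φ^n(a_0) ≠ h for all n ≥ 0 and a sequence n_j → ∞ with 0 < d(φ^{n_j}(a_0), h) < r_{n_j} for all j. -/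
open Filter Topology

/-- The ω-limit set `ω_φ(a₀) = ⋂_N closure {φ^n(a₀) : n > N}`. -/
def omegaLimitSet {X : Type*} [TopologicalSpace X] (φ : X → X) (a0 : X) : Set X :=
  ⋂ N : ℕ, closure {x : X | ∃ n : ℕ, n > N ∧ x = φ^[n] a0}

/-- The set `U_N = (⋃_{n ≥ N} {z ∈ ω_φ(a₀) : d(z, φ^n(a₀)) < r_n}) \ {a₀, …, φ^{N-1}(a₀)}`. -/
def UNset {X : Type*} [MetricSpace X] (φ : X → X) (a0 : X) (r : ℕ → ℝ) (N : ℕ) : Set X :=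
  (⋃ n ∈ {n : ℕ | N ≤ n},
      {z ∈ omegaLimitSet φ a0 | dist z (φ^[n] a0) < r n}) \
    ((fun k => φ^[k] a0) '' {k : ℕ | k < N})

lemma mem_UNset' {X : Type*} [MetricSpace X] {φ : X → X} {a0 : X} {r : ℕ → ℝ} {N : ℕ} {z : X} :
    z ∈ UNset φ a0 r N ↔
      (∃ n, N ≤ n ∧ z ∈ omegaLimitSet φ a0 ∧ dist z (φ^[n] a0) < r n) ∧
      ∀ k, k < N → φ^[k] a0 ≠ z := by
  simp only [UNset, Set.mem_diff, Set.mem_iUnion, Set.mem_setOf_eq, Set.mem_sep_iff,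
    Set.mem_image, not_exists, not_and]
  constructor
  · rintro ⟨⟨n, hn, hz, hd⟩, hF⟩
    exact ⟨⟨n, hn, hz, hd⟩, fun k hk hke => hF k hk hke⟩
  · rintro ⟨⟨n, hn, hz, hd⟩, hF⟩
    exact ⟨⟨n, hn, hz, hd⟩, fun k hk hke => hF k hk hke⟩

lemma UNset_subset_omega {X : Type*} [MetricSpace X] {φ : X → X} {a0 : X} {r : ℕ → ℝ} {N : ℕ} :
    UNset φ a0 r N ⊆ omegaLimitSet φ a0 := by
  intro z hz
  obtain ⟨⟨n, _, hz, _⟩, _⟩ := mem_UNset'.mp hz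
  exact hz

/-- Baire category construction: with an infinite orbit whose tails are dense
in the ω-limit set, each `U_N` (for `N ≥ N₀`) is relatively open and dense in `ω_φ(a₀)`, the
intersection `B = ⋂_{N ≥ N₀} U_N` is dense in `ω_φ(a₀)`, and in particular (if `ω_φ(a₀) ≠ ∅`)
there is `h ∈ ω_φ(a₀)` avoided by the orbit with `0 < d(φ^{n_j}(a₀), h) < r_{n_j}` along a
sequence `n_j → ∞`. -/
theorem degenerating_escape_rate_stmt3
    {X : Type*} [MetricSpace X] [CompactSpace X]
    (φ : X → X) (hφ : Continuous φ) (a0 : X) (N0 : ℕ)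
    (h_inj : Function.Injective fun n : ℕ => φ^[n] a0)
    (r : ℕ → ℝ) (hr_pos : ∀ n, 0 < r n) (hr_anti : Antitone r)
    (hr_lim : Tendsto r atTop (𝓝 0))
    (h_tail_dense : ∀ N : ℕ, N0 ≤ N →
      {x : X | ∃ n : ℕ, N ≤ n ∧ x = φ^[n] a0} ⊆ omegaLimitSet φ a0 ∧
      omegaLimitSet φ a0 ⊆ closure {x : X | ∃ n : ℕ, N ≤ n ∧ x = φ^[n] a0}) :
    (∀ N : ℕ, N0 ≤ N →
        (∃ V : Set X, IsOpen V ∧ UNset φ a0 r N = V ∩ omegaLimitSet φ a0) ∧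
        omegaLimitSet φ a0 ⊆ closure (UNset φ a0 r N)) ∧
    omegaLimitSet φ a0 ⊆ closure (⋂ N ∈ {N : ℕ | N0 ≤ N}, UNset φ a0 r N) ∧
    ((omegaLimitSet φ a0).Nonempty →
      ∃ h ∈ omegaLimitSet φ a0, (∀ n : ℕ, φ^[n] a0 ≠ h) ∧
        ∃ nj : ℕ → ℕ, StrictMono nj ∧
          ∀ j : ℕ, 0 < dist (φ^[nj j] a0) h ∧ dist (φ^[nj j] a0) h < r (nj j)) := by
  set Ω := omegaLimitSet φ a0 with hΩ
  have hΩclosed : IsClosed Ω := isClosed_iInter fun N => isClosed_closure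
  -- Part 1
  have part1 : ∀ N : ℕ, N0 ≤ N →
      (∃ V : Set X, IsOpen V ∧ UNset φ a0 r N = V ∩ Ω) ∧ Ω ⊆ closure (UNset φ a0 r N) := by
    intro N hN
    constructor
    · refine ⟨(⋃ n ∈ {n : ℕ | N ≤ n}, Metric.ball (φ^[n] a0) (r n)) \
        ((fun k => φ^[k] a0) '' {k : ℕ | k < N}), ?_, ?_⟩
      · apply IsOpen.sdiff
        · exact isOpen_biUnion fun n _ => Metric.isOpen_ball
        · exact (Set.Finite.image _ (Set.finite_Iio N)).isClosed
      · ext z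
        simp only [mem_UNset', Set.mem_inter_iff, Set.mem_diff, Set.mem_iUnion,
          Set.mem_setOf_eq, Metric.mem_ball, Set.mem_image, not_exists, not_and]
        constructor
        · rintro ⟨⟨n, hn, hz, hd⟩, hF⟩
          exact ⟨⟨⟨n, hn, hd⟩, fun k hk => hF k hk⟩, hz⟩
        · rintro ⟨⟨⟨n, hn, hd⟩, hF⟩, hz⟩
          exact ⟨⟨n, hn, hz, hd⟩, fun k hk => hF k hk⟩
    · intro z hz
      obtain ⟨hsub, hdense⟩ := h_tail_dense N hN
      refine closure_mono ?_ (hdense hz)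
      rintro x ⟨n, hn, rfl⟩
      rw [mem_UNset']
      refine ⟨⟨n, hn, hsub ⟨n, hn, rfl⟩, by simp [hr_pos n]⟩, ?_⟩
      intro k hk hke
      have := h_inj hke
      omega
  -- Part 2
  have part2 : Ω ⊆ closure (⋂ N ∈ {N : ℕ | N0 ≤ N}, UNset φ a0 r N) := by
    haveI : CompactSpace Ω := isCompact_iff_compactSpace.mp (hΩclosed.isCompact)
    have hdense : Dense (⋂ N ∈ {N : ℕ | N0 ≤ N},
        ((↑) : Ω → X) ⁻¹' (UNset φ a0 r N)) := by
      apply dense_biInter_of_isOpen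
      · intro N hN
        obtain ⟨⟨V, hV, hVe⟩, _⟩ := part1 N hN
        have : ((↑) : Ω → X) ⁻¹' (UNset φ a0 r N) = ((↑) : Ω → X) ⁻¹' V := by
          ext z
          simp [hVe, z.2]
        rw [this]
        exact hV.preimage continuous_subtype_val
      · exact Set.to_countable _
      · intro N hN
        obtain ⟨_, hdN⟩ := part1 N hN
        intro x
        rw [closure_subtype, Subtype.image_preimage_coe]
        have : Ω ∩ UNset φ a0 r N = UNset φ a0 r N :=
          Set.inter_eq_self_of_subset_right UNset_subset_omega
        rw [this]
        exact hdN x.2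
    intro z hz
    have h1 : (⟨z, hz⟩ : Ω) ∈ closure (⋂ N ∈ {N : ℕ | N0 ≤ N},
        ((↑) : Ω → X) ⁻¹' UNset φ a0 r N) := hdense _
    rw [closure_subtype] at h1
    refine closure_mono ?_ h1
    rintro x ⟨w, hw, rfl⟩
    simp only [Set.mem_iInter, Set.mem_preimage] at hw ⊢
    exact fun N hN => hw N hN
  refine ⟨part1, part2, ?_⟩
  -- Part 3
  rintro ⟨z, hz⟩
  have hBne : (⋂ N ∈ {N : ℕ | N0 ≤ N}, UNset φ a0 r N).Nonempty := by
    rw [← closure_nonempty_iff]; exact ⟨z, part2 hz⟩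
  obtain ⟨h, hh⟩ := hBne
  simp only [Set.mem_iInter, Set.mem_setOf_eq] at hh
  have hhΩ : h ∈ Ω := UNset_subset_omega (hh N0 le_rfl)
  have havoid : ∀ n, φ^[n] a0 ≠ h := by
    intro n
    exact (mem_UNset'.mp (hh (max N0 (n+1)) (le_max_left _ _))).2 n
      (lt_of_lt_of_le (Nat.lt_succ_self n) (le_max_right _ _))
  have key : ∀ N : ℕ, ∃ n, N ≤ n ∧ 0 < dist (φ^[n] a0) h ∧ dist (φ^[n] a0) h < r n := by
    intro N
    obtain ⟨⟨n, hn, _, hd⟩, _⟩ := mem_UNset'.mp (hh (max N0 N) (le_max_left _ _))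
    refine ⟨n, le_trans (le_max_right _ _) hn, ?_, by rwa [dist_comm] at hd⟩
    rw [dist_pos]; exact havoid n
  choose g hg1 hg2 hg3 using key
  set nj : ℕ → ℕ := fun j => Nat.rec (g 0) (fun _ m => g (m + 1)) j with hnj
  have hmono : StrictMono nj :=
    strictMono_nat_of_lt_succ fun j => lt_of_lt_of_le (Nat.lt_succ_self _) (hg1 (nj j + 1))
  refine ⟨h, hhΩ, havoid, nj, hmono, fun j => ?_⟩
  cases j with
  | zero => exact ⟨hg2 0, hg3 0⟩
  | succ j => exact ⟨hg2 _, hg3 _⟩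
end

section
/- For any sequence (r_n) of positive reals decreasing to 0, there exists an irrational number θ_0 such that e^{2πinθ_0} ≠ 1 for all n ∈ N, and there is a sequence n_j → ∞ with 0 < |e^{2πi n_j θ_0} − 1| < r_{n_j} for all j. In particular, one may take r_n = exp(−(n−1)2^n) to obtain θ_0 irrational with |e^{2πi n_j θ_0} − 1| < exp(−(n_j − 1) 2^{n_j}) along a sequence n_j → ∞. -/
open Filter Topology Complex Real

/-
Baire category. For each `N` the set of `θ` with `‖e^{2πinθ} - 1‖ < r n` for some
`n ≥ N` is open, and it contains every rational `p/q` (take `n` a multiple of `q`), so it is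
dense. Hence the `θ` for which this happens for infinitely many `n` form a dense Gδ set, which
meets the dense Gδ set of irrationals. For irrational `θ` the number `e^{2πinθ}` is never `1`
when `n > 0`, which gives the lower bound `0 < ‖e^{2πinθ} - 1‖`.
-/

lemma exp_two_pi_mul_ofReal_mul_I_eq_one_iff (x : ℝ) :
    cexp (2 * π * x * I) = 1 ↔ ∃ k : ℤ, x = k := by
  rw [Complex.exp_eq_one_iff]
  refine exists_congr fun k => ?_
  rw [show 2 * π * (x : ℂ) * I = x * (2 * π * I) by ring, mul_left_inj' two_pi_I_ne_zero]
  exact_mod_cast Iff.rfl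

lemma exp_two_pi_mul_natCast_mul_eq_one_iff (n : ℕ) (θ : ℝ) :
    cexp (2 * π * n * θ * I) = 1 ↔ ∃ k : ℤ, n * θ = k := by
  rw [← exp_two_pi_mul_ofReal_mul_I_eq_one_iff]
  push_cast
  ring_nf

lemma Irrational.exp_two_pi_mul_natCast_mul_ne_one {θ : ℝ} (hθ : Irrational θ) {n : ℕ}
    (hn : n ≠ 0) : cexp (2 * π * n * θ * I) ≠ 1 := by
  rw [Ne, exp_two_pi_mul_natCast_mul_eq_one_iff]
  rintro ⟨k, hk⟩
  exact (hθ.natCast_mul hn).ne_int k hk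

lemma frequently_exp_two_pi_mul_natCast_mul_ratCast_eq_one (q : ℚ) :
    ∃ᶠ n : ℕ in atTop, cexp (2 * π * n * ((q : ℝ) : ℂ) * I) = 1 := by
  refine frequently_atTop.2 fun N => ⟨q.den * N, Nat.le_mul_of_pos_left N q.pos, ?_⟩
  rw [exp_two_pi_mul_natCast_mul_eq_one_iff]
  have hq := congrArg (Rat.cast : ℚ → ℝ) (Rat.den_mul_eq_num q)
  push_cast at hq
  exact ⟨q.num * N, by push_cast; linear_combination (N : ℝ) * hq⟩

section FrequentlyNearOne

variable (r : ℕ → ℝ)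

lemma setOf_frequently_norm_exp_sub_one_lt_eq_iInter_iUnion :
    {θ : ℝ | ∃ᶠ n : ℕ in atTop, ‖cexp (2 * π * (n : ℂ) * θ * I) - 1‖ < r n} =
      ⋂ N : ℕ, ⋃ n ≥ N, {θ : ℝ | ‖cexp (2 * π * (n : ℂ) * θ * I) - 1‖ < r n} := by
  ext θ
  simp only [Set.mem_ofPred_eq, frequently_atTop, Set.mem_iInter, Set.mem_iUnion, exists_prop]

lemma isGδ_setOf_frequently_norm_exp_sub_one_lt :
    IsGδ {θ : ℝ | ∃ᶠ n : ℕ in atTop, ‖cexp (2 * π * (n : ℂ) * θ * I) - 1‖ < r n} := by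
  rw [setOf_frequently_norm_exp_sub_one_lt_eq_iInter_iUnion]
  refine .iInter_of_isOpen fun N => isOpen_biUnion fun n _ => ?_
  exact isOpen_lt (by fun_prop) continuous_const

variable {r}

lemma setOf_frequently_norm_exp_sub_one_lt_mem_residual (hr : ∀ n, 0 < r n) :
    {θ : ℝ | ∃ᶠ n : ℕ in atTop, ‖cexp (2 * π * (n : ℂ) * θ * I) - 1‖ < r n} ∈ residual ℝ := by
  refine residual_of_dense_Gδ (isGδ_setOf_frequently_norm_exp_sub_one_lt r)
    (Rat.isDenseEmbedding_coe_real.dense.mono ?_)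
  rintro _ ⟨q, rfl⟩
  exact (frequently_exp_two_pi_mul_natCast_mul_ratCast_eq_one q).mono fun n hn => by
    rw [hn, sub_self, norm_zero]
    exact hr n

lemma exists_irrational_frequently_norm_exp_sub_one_lt (hr : ∀ n, 0 < r n) :
    ∃ θ : ℝ, Irrational θ ∧ ∃ᶠ n : ℕ in atTop, ‖cexp (2 * π * (n : ℂ) * θ * I) - 1‖ < r n :=
  (dense_of_mem_residual <| eventually_residual_irrational.and
    (setOf_frequently_norm_exp_sub_one_lt_mem_residual hr)).nonempty

lemma exists_irrational_strictMono_norm_exp_sub_one_lt (hr : ∀ n, 0 < r n) :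
    ∃ θ : ℝ, Irrational θ ∧ ∃ nj : ℕ → ℕ, StrictMono nj ∧ ∀ j,
      0 < ‖cexp (2 * π * (nj j : ℕ) * θ * I) - 1‖ ∧
        ‖cexp (2 * π * (nj j : ℕ) * θ * I) - 1‖ < r (nj j) := by
  obtain ⟨θ, hθ, hfreq⟩ := exists_irrational_frequently_norm_exp_sub_one_lt hr
  obtain ⟨nj, hmono, hnj⟩ :=
    extraction_of_frequently_atTop (hfreq.and_eventually (eventually_ne_atTop 0))
  refine ⟨θ, hθ, nj, hmono, fun j => ⟨?_, (hnj j).1⟩⟩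
  exact norm_pos_iff.2 (sub_ne_zero.2 (hθ.exp_two_pi_mul_natCast_mul_ne_one (hnj j).2))

end FrequentlyNearOne

/-- For any sequence `(r_n)` of positive reals decreasing to `0` there is an
irrational `θ₀` with `e^{2πinθ₀} ≠ 1` for all `n ≥ 1` and a sequence `n_j → ∞` with
`0 < |e^{2πi n_j θ₀} − 1| < r_{n_j}`.  In particular one may take `r_n = exp(−(n−1)2^n)`. -/
theorem degenerating_escape_rate_stmt5 :
    (∀ r : ℕ → ℝ, (∀ n, 0 < r n) → Antitone r → Tendsto r atTop (𝓝 0) →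
      ∃ θ0 : ℝ, Irrational θ0 ∧
        (∀ n : ℕ, 0 < n →
          Complex.exp (2 * Real.pi * (n : ℂ) * (θ0 : ℂ) * Complex.I) ≠ 1) ∧
        ∃ nj : ℕ → ℕ, StrictMono nj ∧ ∀ j : ℕ,
          0 < ‖
              (Complex.exp (2 * Real.pi * ((nj j : ℕ) : ℂ) * (θ0 : ℂ) * Complex.I) - 1)‖ ∧
          ‖
              (Complex.exp (2 * Real.pi * ((nj j : ℕ) : ℂ) * (θ0 : ℂ) * Complex.I) - 1)‖
            < r (nj j)) ∧
    (∃ θ0 : ℝ, Irrational θ0 ∧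
      ∃ nj : ℕ → ℕ, StrictMono nj ∧ ∀ j : ℕ,
        0 < ‖
            (Complex.exp (2 * Real.pi * ((nj j : ℕ) : ℂ) * (θ0 : ℂ) * Complex.I) - 1)‖ ∧
        ‖
            (Complex.exp (2 * Real.pi * ((nj j : ℕ) : ℂ) * (θ0 : ℂ) * Complex.I) - 1)‖
          < Real.exp (-(((nj j : ℕ) : ℝ) - 1) * 2 ^ (nj j))) := by
  refine ⟨fun r hr _ _ => ?_, ?_⟩
  · obtain ⟨θ, hθ, nj, hmono, hnj⟩ := exists_irrational_strictMono_norm_exp_sub_one_lt hr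
    exact ⟨θ, hθ, fun n hn => hθ.exp_two_pi_mul_natCast_mul_ne_one hn.ne', nj, hmono, hnj⟩
  · exact exists_irrational_strictMono_norm_exp_sub_one_lt fun n =>
      Real.exp_pos (-((n : ℝ) - 1) * 2 ^ n)
end

section
/- Let φ(z) = λz be a rotation of C with |λ| = 1 and λ not a root of unity, and let h, a_0 ∈ C with |h| = |a_0| = 1 and λ^n a_0 ≠ h for all n ≥ 0. If λ, a_0, h are algebraic numbers, then there exists a constant C < 0 such that log|λ^n − h/a_0| ≥ C · n for all n ∈ N. Consequently, the series ∑_{n≥0} d^{−n} log[φ^n(a_0), h] converges (is bounded below) for every d > 1. -/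
/-!
Liouville's inequality: a nonzero element `x` of a number field satisfies `|x|_v ≥ H(x)⁻¹` at
every archimedean place `v`, because `H(x⁻¹) = H(x)` dominates each local factor `max(|x⁻¹|_v, 1)`
(this is the product formula at work). Since `H(λⁿ - β) ≤ 2^[K:ℚ] H(λ)ⁿ H(β)`, the distance
`|λⁿ - β|` decays at most exponentially, so `log [λⁿ a₀, h] = log (|λⁿ - h/a₀| / 2)` is `O(n)`
and the series weighted by `d⁻ⁿ` converges.
-/

open Filter Topology

noncomputable def chordalDist (z w : ℂ) : ℝ :=
  ‖z - w‖ /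
    (Real.sqrt (1 + ‖z‖ ^ 2) * Real.sqrt (1 + ‖w‖ ^ 2))

namespace Height

open AdmissibleAbsValues

variable {K : Type*} [Field K] [AdmissibleAbsValues K] {v : AbsoluteValue K ℝ}

lemma le_mulHeight₁_of_mem_archAbsVal (hv : v ∈ archAbsVal) (x : K) : v x ≤ mulHeight₁ x := by
  obtain ⟨s, hs⟩ := Multiset.exists_cons_of_mem hv
  have hrest : 1 ≤ (s.map fun w ↦ max (w x) 1).prod :=
    Multiset.one_le_prod_map fun _ _ ↦ le_max_right ..
  have hfin : 1 ≤ ∏ᶠ w : nonarchAbsVal, max (w.val x) 1 := one_le_finprod fun _ ↦ le_max_right ..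
  calc v x ≤ max (v x) 1 := le_max_left ..
    _ ≤ max (v x) 1 * (s.map fun w ↦ max (w x) 1).prod *
          ∏ᶠ w : nonarchAbsVal, max (w.val x) 1 := by
      rw [mul_assoc]
      exact le_mul_of_one_le_right (by positivity) (one_le_mul_of_one_le_of_one_le hrest hfin)
    _ = mulHeight₁ x := by rw [mulHeight₁_eq, hs, Multiset.map_cons, Multiset.prod_cons]

/-- Liouville's inequality. -/
lemma inv_mulHeight₁_le_of_mem_archAbsVal (hv : v ∈ archAbsVal) {x : K} (hx : x ≠ 0) :
    (mulHeight₁ x)⁻¹ ≤ v x := by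
  have hinv := le_mulHeight₁_of_mem_archAbsVal hv x⁻¹
  rw [mulHeight₁_inv, map_inv₀] at hinv
  exact inv_le_of_inv_le₀ (v.pos hx) hinv

lemma inv_pow_le_pow_sub_of_mem_archAbsVal (hv : v ∈ archAbsVal) {x y : K} {n : ℕ} (hn : n ≠ 0)
    (hne : x ^ n ≠ y) :
    (2 ^ totalWeight K * mulHeight₁ x * mulHeight₁ y)⁻¹ ^ n ≤ v (x ^ n - y) := by
  have h2 : (1 : ℝ) ≤ 2 ^ totalWeight K := one_le_pow₀ one_le_two
  have hy := one_le_mulHeight₁ y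
  calc (2 ^ totalWeight K * mulHeight₁ x * mulHeight₁ y)⁻¹ ^ n
      = ((2 ^ totalWeight K) ^ n * mulHeight₁ x ^ n * mulHeight₁ y ^ n)⁻¹ := by
        rw [inv_pow, mul_pow, mul_pow]
    _ ≤ (2 ^ totalWeight K * mulHeight₁ x ^ n * mulHeight₁ y)⁻¹ := by
        gcongr
        · exact le_self_pow₀ h2 hn
        · exact le_self_pow₀ hy hn
    _ ≤ (mulHeight₁ (x ^ n - y))⁻¹ := by
        gcongr
        exact (mulHeight₁_sub_le _ _).trans_eq (by rw [mulHeight₁_pow])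
    _ ≤ v (x ^ n - y) := inv_mulHeight₁_le_of_mem_archAbsVal hv (sub_ne_zero.mpr hne)

end Height

open IntermediateField NumberField in
theorem exists_pow_le_norm_pow_sub_of_isAlgebraic {α β : ℂ} (hα : IsAlgebraic ℚ α)
    (hβ : IsAlgebraic ℚ β) (hne : ∀ n : ℕ, 0 < n → α ^ n ≠ β) :
    ∃ c : ℝ, 0 < c ∧ c < 1 ∧ ∀ n : ℕ, 0 < n → c ^ n ≤ ‖α ^ n - β‖ := by
  have := finiteDimensional_adjoin_pair hα.isIntegral hβ.isIntegral
  have : NumberField ℚ⟮α, β⟯ := {}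
  let a : ℚ⟮α, β⟯ := ⟨α, subset_adjoin ℚ _ (by simp)⟩
  let b : ℚ⟮α, β⟯ := ⟨β, subset_adjoin ℚ _ (by simp)⟩
  let v := (InfinitePlace.mk (ℚ⟮α, β⟯).val.toRingHom).val
  have hv : v ∈ Height.AdmissibleAbsValues.archAbsVal :=
    mem_multisetInfinitePlace.mpr (InfinitePlace.isInfinitePlace _)
  refine ⟨(2 ^ Height.totalWeight ℚ⟮α, β⟯ * Height.mulHeight₁ a * Height.mulHeight₁ b)⁻¹,
    by positivity, inv_lt_one_of_one_lt₀ ?_, fun n hn ↦ ?_⟩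
  · exact one_lt_mul_of_lt_of_le (one_lt_mul_of_lt_of_le
      (one_lt_pow₀ one_lt_two (totalWeight_pos _).ne') (Height.one_le_mulHeight₁ a))
      (Height.one_le_mulHeight₁ b)
  · exact Height.inv_pow_le_pow_sub_of_mem_archAbsVal hv hn.ne'
      (fun h ↦ hne n hn (congrArg Subtype.val h))

lemma chordalDist_eq_of_norm_eq_one {z w : ℂ} (hz : ‖z‖ = 1) (hw : ‖w‖ = 1) :
    chordalDist z w = ‖z - w‖ / 2 := by
  rw [chordalDist, hz, hw, ← Real.sqrt_mul_self (by norm_num : (0 : ℝ) ≤ 2)]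
  norm_num

lemma chordalDist_le_one_of_norm_eq_one {z w : ℂ} (hz : ‖z‖ = 1) (hw : ‖w‖ = 1) :
    chordalDist z w ≤ 1 := by
  rw [chordalDist_eq_of_norm_eq_one hz hw, div_le_one two_pos]
  exact (norm_sub_le z w).trans (by rw [hz, hw]; norm_num)

open Asymptotics in
lemma isBigO_log_of_mul_pow_le {t : ℕ → ℝ} {a c : ℝ} (ha : 0 < a) (hc : 0 < c)
    (hlow : ∀ n : ℕ, 0 < n → a * c ^ n ≤ t n) (hup : ∀ n, t n ≤ 1) :
    (fun n ↦ Real.log (t n)) =O[atTop] fun n ↦ (n : ℝ) := by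
  refine IsBigO.of_bound (|Real.log a| + |Real.log c|) ?_
  filter_upwards [eventually_gt_atTop 0] with n hn
  have hn1 : (1 : ℝ) ≤ n := by exact_mod_cast hn
  have hpos : 0 < a * c ^ n := by positivity
  have hlog : Real.log (a * c ^ n) ≤ Real.log (t n) := Real.log_le_log hpos (hlow n hn)
  rw [Real.log_mul ha.ne' (by positivity), Real.log_pow] at hlog
  rw [Real.norm_eq_abs, Real.norm_eq_abs, Nat.abs_cast,
    abs_of_nonpos (Real.log_nonpos (hpos.le.trans (hlow n hn)) (hup n))]
  nlinarith [neg_abs_le (Real.log a), neg_abs_le (Real.log c), abs_nonneg (Real.log a)]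

open Asymptotics in
lemma summable_inv_pow_mul_of_isBigO {d : ℝ} (hd : 1 < d) {u : ℕ → ℝ}
    (hu : u =O[atTop] fun n ↦ (n : ℝ)) : Summable fun n ↦ (d ^ n)⁻¹ * u n := by
  have hr : ‖d⁻¹‖ < 1 := by
    rw [norm_inv, Real.norm_of_nonneg (by linarith)]; exact inv_lt_one_of_one_lt₀ hd
  refine summable_of_isBigO_nat (g := fun n ↦ (n : ℝ) ^ 1 * d⁻¹ ^ n)
    (summable_pow_mul_geometric_of_norm_lt_one 1 hr) ?_
  simpa [inv_pow, mul_comm] using (isBigO_refl (fun n : ℕ ↦ (d ^ n)⁻¹) atTop).mul hu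

theorem degenerating_escape_rate_stmt11_general
    (lam a0 h : ℂ)
    (h_alg : IsAlgebraic ℚ lam ∧ IsAlgebraic ℚ a0 ∧ IsAlgebraic ℚ h)
    (h_lam : ‖lam‖ = 1)
    (h_a0 : ‖a0‖ = 1) (h_h : ‖h‖ = 1)
    (h_ne : ∀ n : ℕ, lam ^ n * a0 ≠ h) :
    (∃ C : ℝ, C < 0 ∧ ∀ n : ℕ, 1 ≤ n →
      C * (n : ℝ) ≤ Real.log (‖lam ^ n - h / a0‖)) ∧
    ∀ d : ℕ, 1 < d → ∃ S : ℝ,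
      Tendsto (fun N => ∑ n ∈ Finset.range N,
        ((d : ℝ) ^ n)⁻¹ * Real.log (chordalDist (lam ^ n * a0) h)) atTop (𝓝 S) := by
  have ha0 : a0 ≠ 0 := norm_ne_zero_iff.mp (by rw [h_a0]; exact one_ne_zero)
  have hquot : IsAlgebraic ℚ (h / a0) := by
    rw [div_eq_mul_inv]; exact h_alg.2.2.mul h_alg.2.1.inv
  obtain ⟨c, hc0, hc1, hc⟩ := exists_pow_le_norm_pow_sub_of_isAlgebraic h_alg.1 hquot
    fun n _ heq ↦ h_ne n (by rw [heq, div_mul_cancel₀ _ ha0])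
  have horbit : ∀ n, ‖lam ^ n * a0‖ = 1 := by simp [h_lam, h_a0]
  have hchord : ∀ n, 0 < n → 2⁻¹ * c ^ n ≤ chordalDist (lam ^ n * a0) h := fun n hn ↦ by
    rw [chordalDist_eq_of_norm_eq_one (horbit n) h_h, inv_mul_eq_div,
      show lam ^ n * a0 - h = (lam ^ n - h / a0) * a0 by field_simp, norm_mul, h_a0, mul_one]
    gcongr
    exact hc n hn
  refine ⟨⟨Real.log c, Real.log_neg hc0 hc1, fun n hn ↦ ?_⟩, fun d hd ↦ ?_⟩
  · rw [mul_comm, ← Real.log_pow]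
    exact Real.log_le_log (by positivity) (hc n hn)
  · have hlog := isBigO_log_of_mul_pow_le (by norm_num) hc0 hchord
      fun n ↦ chordalDist_le_one_of_norm_eq_one (horbit n) h_h
    exact ⟨_, (summable_inv_pow_mul_of_isBigO (by exact_mod_cast hd) hlog).hasSum.tendsto_sum_nat⟩

/-- Let `φ(z) = λz` with `|λ| = 1`, `λ` not a root of unity, and let
`h, a₀` on the unit circle with `λⁿ a₀ ≠ h` for all `n ≥ 0`.  If `λ, a₀, h` are algebraic
numbers, then there is `C < 0` with `log|λⁿ − h/a₀| ≥ C·n` for all `n ≥ 1`; consequently for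
every integer `d > 1` the series `∑ d^{−n} log [φⁿ(a₀), h]` converges. -/
theorem degenerating_escape_rate_stmt11
    (lam a0 h : ℂ)
    (h_alg : IsAlgebraic ℚ lam ∧ IsAlgebraic ℚ a0 ∧ IsAlgebraic ℚ h)
    (h_lam : ‖lam‖ = 1)
    (h_not_root : ∀ n : ℕ, 0 < n → lam ^ n ≠ 1)
    (h_a0 : ‖a0‖ = 1) (h_h : ‖h‖ = 1)
    (h_ne : ∀ n : ℕ, lam ^ n * a0 ≠ h) :
    (∃ C : ℝ, C < 0 ∧ ∀ n : ℕ, 1 ≤ n →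
      C * (n : ℝ) ≤ Real.log (‖lam ^ n - h / a0‖)) ∧
    ∀ d : ℕ, 1 < d → ∃ S : ℝ,
      Tendsto (fun N => ∑ n ∈ Finset.range N,
        ((d : ℝ) ^ n)⁻¹ * Real.log (chordalDist (lam ^ n * a0) h)) atTop (𝓝 S) :=
  degenerating_escape_rate_stmt11_general lam a0 h h_alg h_lam h_a0 h_h h_ne
end

section
/- Let f_t be a holomorphic family of rational maps of degree d > 1 on P^1, parameterized by t ∈ D*, such that for every t ∈ D* the map f_t is Möbius conjugate to a polynomial, and assume f_t → φ locally uniformly on P^1 \ {h} as t → 0, where φ is a rational map of degree d − 1 > 0 and h ∈ P^1. Let p_t ∈ P^1 denote the totally ramified superattracting fixed point of f_t (the preimage of ∞ under the conjugating Möbius map, where deg_{p_t} f_t = d). Then lim_{t→0} p_t = h. -/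
open Filter Topology Polynomial

/-- The chordal distance between the points `[v₁ : v₂]` and `[w₁ : w₂]` of `ℙ¹`, written in
homogeneous coordinates: `[v, w] = |v₁w₂ − v₂w₁| / (‖v‖‖w‖)`. -/
noncomputable def chordalP1 (v w : ℂ × ℂ) : ℝ :=
  ‖(v.1 * w.2 - v.2 * w.1)‖ /
    (Real.sqrt (‖v.1‖ ^ 2 + ‖v.2‖ ^ 2) *
      Real.sqrt (‖w.1‖ ^ 2 + ‖w.2‖ ^ 2))

/-- Evaluation at `(z, w)` of the degree-`n` homogenization of a polynomial `P`. -/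
noncomputable def homEval (P : Polynomial ℂ) (n : ℕ) (v : ℂ × ℂ) : ℂ :=
  ∑ i ∈ Finset.range (n + 1), P.coeff i * v.1 ^ i * v.2 ^ (n - i)

/-!
Suppose `p t` had a cluster point `q ≠ h` in `ℙ¹`; after the chart `z ↦ 1 / z` we may take `q`
finite. Near `q` the maps `f t = P t / Q t` converge uniformly to `φ = A / B`, and `f t (p t) = p t`
forces `φ q = q`. The identity `P t - p t Q t = c t (X - p t) ^ d` says
`f t z - p t = v t z * (z - p t) ^ d` with `v t = c t / Q t` holomorphic on a disc around `q`, so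
the maximum modulus principle bounds `v t` on the disc by its values on the boundary circle, where
`f t - p t` stays bounded. In the limit `φ z - q = O((z - q) ^ d)`: the polynomial `A - q B`
vanishes to order `d` at `q`, although its degree is at most `d - 1`.
-/

open Metric Asymptotics Bornology

lemma chordalP1_nonneg (v w : ℂ × ℂ) : 0 ≤ chordalP1 v w := by
  unfold chordalP1; positivity

lemma chordalP1_swap (v w : ℂ × ℂ) : chordalP1 (v.2, v.1) (w.2, w.1) = chordalP1 v w := by
  unfold chordalP1
  rw [← norm_neg]
  congr 2 <;> ring_nf

lemma chordalP1_smul_left {a : ℂ} (ha : a ≠ 0) (x y : ℂ) (w : ℂ × ℂ) :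
    chordalP1 (a * x, a * y) w = chordalP1 (x, y) w := by
  unfold chordalP1
  have hsq : √(‖a * x‖ ^ 2 + ‖a * y‖ ^ 2) = ‖a‖ * √(‖x‖ ^ 2 + ‖y‖ ^ 2) := by
    rw [norm_mul, norm_mul, mul_pow, mul_pow, ← mul_add, Real.sqrt_mul (sq_nonneg _),
      Real.sqrt_sq (norm_nonneg a)]
  simp only
  rw [hsq, show a * x * w.2 - a * y * w.1 = a * (x * w.2 - y * w.1) by ring, norm_mul, mul_assoc,
    mul_div_mul_left _ _ (norm_ne_zero_iff.mpr ha)]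

lemma sqrt_normSq_pos {x y : ℂ} (h : ¬(x = 0 ∧ y = 0)) : 0 < √(‖x‖ ^ 2 + ‖y‖ ^ 2) := by
  rw [not_and_or] at h
  apply Real.sqrt_pos.2
  rcases h with h | h <;> have := norm_pos_iff.2 h <;> positivity

lemma continuousAt_chordalP1 {v w : ℂ → ℂ × ℂ} {z : ℂ} (hv : ContinuousAt v z)
    (hw : ContinuousAt w z) (hv0 : ¬((v z).1 = 0 ∧ (v z).2 = 0))
    (hw0 : ¬((w z).1 = 0 ∧ (w z).2 = 0)) :
    ContinuousAt (fun x => chordalP1 (v x) (w x)) z := by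
  unfold chordalP1
  have h1 := hv.fst; have h2 := hv.snd; have h3 := hw.fst; have h4 := hw.snd
  exact ContinuousAt.div (by fun_prop) (by fun_prop)
    (mul_pos (sqrt_normSq_pos hv0) (sqrt_normSq_pos hw0)).ne'

lemma norm_le_sqrt_normSq (x y : ℂ) : ‖x‖ ≤ √(‖x‖ ^ 2 + ‖y‖ ^ 2) :=
  Real.le_sqrt_of_sq_le (le_add_of_nonneg_right (sq_nonneg _))

lemma sqrt_normSq_le (x y : ℂ) : √(‖x‖ ^ 2 + ‖y‖ ^ 2) ≤ ‖x‖ + ‖y‖ :=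
  Real.sqrt_le_iff.2 ⟨by positivity, by nlinarith [norm_nonneg x, norm_nonneg y]⟩

lemma ne_zero_and_norm_div_sub_div_le {x y a b : ℂ} {k : ℝ} (hxy : ¬(x = 0 ∧ y = 0))
    (hb : b ≠ 0) (hk : √(‖a‖ ^ 2 + ‖b‖ ^ 2) ≤ k * ‖b‖)
    (hs : 2 * chordalP1 (x, y) (a, b) * k ≤ 1) :
    y ≠ 0 ∧ ‖x / y - a / b‖ ≤ 4 * k ^ 2 * chordalP1 (x, y) (a, b) := by
  set s := chordalP1 (x, y) (a, b)
  set V := √(‖x‖ ^ 2 + ‖y‖ ^ 2)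
  set N := √(‖a‖ ^ 2 + ‖b‖ ^ 2)
  have hV : 0 < V := sqrt_normSq_pos hxy
  have hb' : 0 < ‖b‖ := norm_pos_iff.2 hb
  have hN : 0 < N := sqrt_normSq_pos (fun h => hb h.2)
  have hk0 : 0 < k := pos_of_mul_pos_left (hN.trans_le hk) hb'.le
  have hs0 : 0 ≤ s := by unfold s chordalP1; positivity
  have hcross : ‖x * b - y * a‖ = s * V * N := by
    rw [show s = ‖x * b - y * a‖ / (V * N) from rfl]; field_simp
  have hxb : ‖x‖ * ‖b‖ ≤ ‖x * b - y * a‖ + ‖y‖ * ‖a‖ := by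
    calc ‖x‖ * ‖b‖ = ‖(x * b - y * a) + y * a‖ := by rw [sub_add_cancel, norm_mul]
      _ ≤ ‖x * b - y * a‖ + ‖y‖ * ‖a‖ := (norm_add_le _ _).trans_eq (by rw [norm_mul])
  have hVy : V ≤ 4 * k * ‖y‖ := by
    -- `‖b‖ V ≤ ‖x‖ ‖b‖ + ‖y‖ ‖b‖`, then `hxb` and `‖a‖, ‖b‖ ≤ N`
    have h1 : ‖b‖ * V ≤ s * V * N + 2 * ‖y‖ * N := by
      nlinarith [sqrt_normSq_le x y, norm_le_sqrt_normSq a b, norm_le_sqrt_normSq b a,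
        (by rw [add_comm] : N = √(‖b‖ ^ 2 + ‖a‖ ^ 2)), norm_nonneg y, norm_nonneg a]
    have h2 : s * N ≤ ‖b‖ / 2 := by nlinarith
    have h3 : ‖b‖ * V ≤ 4 * ‖y‖ * N := by nlinarith [mul_le_mul_of_nonneg_right h2 hV.le]
    have h4 : ‖b‖ * V ≤ ‖b‖ * (4 * k * ‖y‖) := by
      nlinarith [mul_le_mul_of_nonneg_left hk (norm_nonneg y)]
    exact le_of_mul_le_mul_left h4 hb'
  have hy : y ≠ 0 := by
    rintro rfl
    simp at hVy; linarith
  refine ⟨hy, ?_⟩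
  have hy' : 0 < ‖y‖ := norm_pos_iff.2 hy
  rw [div_sub_div _ _ hy hb, norm_div, norm_mul, hcross, div_le_iff₀ (by positivity)]
  calc s * V * N ≤ s * (4 * k * ‖y‖) * (k * ‖b‖) := by gcongr
    _ = 4 * k ^ 2 * s * (‖y‖ * ‖b‖) := by ring

lemma tendstoUniformlyOn_div_of_chordalP1 {ι : Type*} {L : Filter ι} {K : Set ℂ}
    (hK : IsCompact K) {u v : ι → ℂ → ℂ} {a b : ℂ → ℂ} (ha : ContinuousOn a K)
    (hb : ContinuousOn b K) (hb0 : ∀ z ∈ K, b z ≠ 0)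
    (huv : ∀ᶠ t in L, ∀ z ∈ K, ¬(u t z = 0 ∧ v t z = 0))
    (hconv : ∀ ε : ℝ, 0 < ε → ∀ᶠ t in L, ∀ z ∈ K, chordalP1 (u t z, v t z) (a z, b z) < ε) :
    (∀ᶠ t in L, ∀ z ∈ K, v t z ≠ 0) ∧
      TendstoUniformlyOn (fun t z => u t z / v t z) (fun z => a z / b z) L K := by
  obtain ⟨k₀, hk₀⟩ := hK.exists_bound_of_continuousOn
    (f := fun z => √(‖a z‖ ^ 2 + ‖b z‖ ^ 2) / ‖b z‖)
    (ContinuousOn.div (by fun_prop) (by fun_prop) fun z hz => norm_ne_zero_iff.2 (hb0 z hz))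
  set k := max k₀ 1
  have hk : 0 < k := lt_max_of_lt_right one_pos
  have hbound : ∀ z ∈ K, √(‖a z‖ ^ 2 + ‖b z‖ ^ 2) ≤ k * ‖b z‖ := fun z hz => by
    have := (le_abs_self _).trans ((Real.norm_eq_abs _ ▸ hk₀ z hz).trans (le_max_left k₀ 1))
    rwa [div_le_iff₀ (norm_pos_iff.2 (hb0 z hz))] at this
  have hclose : ∀ ε : ℝ, 0 < ε → ∀ᶠ t in L, ∀ z ∈ K,
      v t z ≠ 0 ∧ ‖u t z / v t z - a z / b z‖ < ε := fun ε hε => by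
    filter_upwards [huv, hconv (min (1 / (2 * k)) (ε / (8 * k ^ 2))) (by positivity)]
      with t huv' hconv' z hz
    have hs := hconv' z hz
    have hs1 : 2 * chordalP1 (u t z, v t z) (a z, b z) * k ≤ 1 := by
      have := hs.trans_le (min_le_left _ _)
      rw [lt_div_iff₀ (by positivity)] at this
      linarith
    have hs2 : 4 * k ^ 2 * chordalP1 (u t z, v t z) (a z, b z) < ε := by
      have := hs.trans_le (min_le_right _ _)
      rw [lt_div_iff₀ (by positivity)] at this
      linarith
    obtain ⟨hv, hle⟩ := ne_zero_and_norm_div_sub_div_le (huv' z hz) (hb0 z hz) (hbound z hz) hs1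
    exact ⟨hv, hle.trans_lt hs2⟩
  refine ⟨(hclose 1 one_pos).mono fun t ht z hz => (ht z hz).1,
    Metric.tendstoUniformlyOn_iff.2 fun ε hε => (hclose ε hε).mono fun t ht z hz => ?_⟩
  rw [dist_comm, dist_eq_norm]
  exact (ht z hz).2

lemma norm_sub_le_mul_pow_of_eq_mul_pow {g v : ℂ → ℂ} {q p : ℂ} {R K : ℝ} {d : ℕ} (hR : 0 < R)
    (hv : DifferentiableOn ℂ v (closedBall q R))
    (hgv : ∀ z ∈ closedBall q R, g z - p = v z * (z - p) ^ d)
    (hp : dist p q ≤ R / 2) (hg : ∀ z ∈ sphere q R, ‖g z - p‖ ≤ K) :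
    ∀ z ∈ closedBall q R, ‖g z - p‖ ≤ K * (2 / R) ^ d * ‖z - p‖ ^ d := by
  have hsphere : ∀ z ∈ sphere q R, ‖v z‖ ≤ K * (2 / R) ^ d := fun z hz => by
    have hzp : R / 2 ≤ ‖z - p‖ := by
      have := dist_triangle z p q
      rw [mem_sphere.1 hz, dist_eq_norm] at this
      linarith
    have hK := hg z hz
    rw [hgv z (sphere_subset_closedBall hz), norm_mul, norm_pow] at hK
    have h1 : ‖v z‖ * (R / 2) ^ d ≤ K :=
      (mul_le_mul_of_nonneg_left (pow_le_pow_left₀ (by positivity) hzp d) (norm_nonneg _)).trans hK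
    rwa [← inv_div, inv_pow, ← div_eq_mul_inv, le_div_iff₀ (by positivity)]
  intro z hz
  have hvz : ‖v z‖ ≤ K * (2 / R) ^ d := by
    refine Complex.norm_le_of_forall_mem_frontier_norm_le isBounded_ball
      (hv.diffContOnCl_ball subset_rfl) (fun w hw => hsphere w ?_) ?_
    · rwa [frontier_ball q hR.ne'] at hw
    · rwa [closure_ball q hR.ne']
  rw [hgv z hz, norm_mul, norm_pow]
  gcongr

lemma Polynomial.pow_X_sub_C_dvd_of_isBigO {𝕜 : Type*} [NontriviallyNormedField 𝕜] {ψ : 𝕜[X]}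
    {q : 𝕜} {d : ℕ} (hψ : ψ ≠ 0) (h : (fun z => ψ.eval z) =O[𝓝 q] fun z => (z - q) ^ d) :
    (X - C q) ^ d ∣ ψ := by
  rw [← le_rootMultiplicity_iff hψ]
  by_contra! hlt
  set m := ψ.rootMultiplicity q
  set ψ₁ := ψ /ₘ (X - C q) ^ m
  have hfac : ∀ z, ψ.eval z = (z - q) ^ m * ψ₁.eval z := fun z => by
    conv_lhs => rw [← pow_mul_divByMonic_rootMultiplicity_eq ψ q]
    simp [ψ₁, m]
  have hψ₁ : Tendsto (fun z => ψ₁.eval z) (𝓝[≠] q) (𝓝 0) := by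
    have hO : (fun z => ψ₁.eval z) =O[𝓝[≠] q] fun z => (z - q) ^ (d - m) := by
      refine ((h.mono nhdsWithin_le_nhds).mul (isBigO_refl (fun z => ((z - q) ^ m)⁻¹) _)).congr'
        ?_ ?_ <;> filter_upwards [self_mem_nhdsWithin] with z hz
      · rw [hfac]; field_simp [sub_ne_zero.2 hz]
      · rw [← pow_sub₀ _ (sub_ne_zero.2 hz) hlt.le]
    refine hO.trans_tendsto ?_
    have : Tendsto (fun z : 𝕜 => (z - q) ^ (d - m)) (𝓝 q) (𝓝 ((q - q) ^ (d - m))) :=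
      ((continuous_id.sub continuous_const).pow _).tendsto q
    rw [sub_self, zero_pow (by omega)] at this
    exact this.mono_left nhdsWithin_le_nhds
  exact eval_divByMonic_pow_rootMultiplicity_ne_zero q hψ
    (tendsto_nhds_unique (ψ₁.continuous.continuousAt.tendsto.mono_left nhdsWithin_le_nhds) hψ₁)

namespace Polynomial

variable {K : Type*} [Field K]

lemma reflect_X_sub_C_pow (a : K) (n : ℕ) : reflect n ((X - C a) ^ n) = (1 - C a * X) ^ n := by
  induction n with
  | zero => simp [reflect_one]
  | succ n ih =>
    rw [pow_succ, reflect_mul _ _ (natDegree_pow_le.trans (by rw [natDegree_X_sub_C, mul_one]))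
      (natDegree_X_sub_C_le a), ih, reflect_sub, reflect_C, reflect_one_X, pow_succ]
    ring

lemma reflect_sub_C_mul_eq {P Q : K[X]} {p c : K} {d : ℕ} (hp : p ≠ 0)
    (h : P - C p * Q = C c * (X - C p) ^ d) :
    reflect d Q - C p⁻¹ * reflect d P = C (-(c * (-p) ^ d * p⁻¹)) * (X - C p⁻¹) ^ d := by
  have h' := congrArg (reflect d) h
  rw [reflect_sub, reflect_C_mul, reflect_C_mul, reflect_X_sub_C_pow,
    show 1 - C p * X = C (-p) * (X - C p⁻¹) by
      rw [mul_sub, ← C_mul, neg_mul, mul_inv_cancel₀ hp, map_neg, map_neg, C_1]; ring] at h'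
  have hinv : C p⁻¹ * C p = 1 := by rw [← C_mul, inv_mul_cancel₀ hp, C_1]
  simp only [map_neg, map_mul, map_pow, mul_pow] at h' ⊢
  linear_combination (-C p⁻¹) * h' - reflect d Q * hinv

lemma eval_reflect_eq_zero_iff {f : K[X]} {n : ℕ} (hf : f.natDegree ≤ n) {z : K} (hz : z ≠ 0) :
    (reflect n f).eval z = 0 ↔ f.eval z⁻¹ = 0 := by
  let _ := invertibleOfNonzero (inv_ne_zero hz)
  have := eval₂_reflect_eq_zero_iff (RingHom.id K) z⁻¹ n f hf
  rwa [invOf_eq_inv, inv_inv] at this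

lemma not_eval_eq_zero_and_of_isCoprime {f g : K[X]} (hfg : IsCoprime f g) (z : K) :
    ¬(f.eval z = 0 ∧ g.eval z = 0) := by
  rintro ⟨hf, hg⟩
  obtain ⟨u, v, huv⟩ := hfg
  simpa [hf, hg] using congrArg (eval z) huv

lemma not_coeff_eq_zero_and_of_max_natDegree_eq {f g : K[X]} {n : ℕ} (hn : 0 < n)
    (hdeg : max f.natDegree g.natDegree = n) : ¬(f.coeff n = 0 ∧ g.coeff n = 0) := by
  rintro ⟨hf, hg⟩
  rcases max_choice f.natDegree g.natDegree with h | h <;> rw [h] at hdeg <;> subst hdeg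
  · exact leadingCoeff_ne_zero.2 (ne_zero_of_natDegree_gt hn) hf
  · exact leadingCoeff_ne_zero.2 (ne_zero_of_natDegree_gt hn) hg

lemma not_eval_reflect_eq_zero_and {f g : K[X]} {n : ℕ} (hn : 0 < n) (hfg : IsCoprime f g)
    (hdeg : max f.natDegree g.natDegree = n) (z : K) :
    ¬((reflect n f).eval z = 0 ∧ (reflect n g).eval z = 0) := by
  rcases eq_or_ne z 0 with rfl | hz
  · simpa only [← coeff_zero_eq_eval_zero, coeff_reflect, revAt_zero]
      using not_coeff_eq_zero_and_of_max_natDegree_eq hn hdeg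
  · rw [eval_reflect_eq_zero_iff (hdeg ▸ le_max_left _ _) hz,
      eval_reflect_eq_zero_iff (hdeg ▸ le_max_right _ _) hz]
    exact not_eval_eq_zero_and_of_isCoprime hfg _

lemma sub_C_mul_ne_zero_of_isCoprime {A B : K[X]} (hAB : IsCoprime A B)
    (hdeg : 0 < max A.natDegree B.natDegree) (q : K) : A - C q * B ≠ 0 := by
  intro h
  rw [sub_eq_zero] at h
  have hB : B.natDegree = 0 :=
    natDegree_eq_zero_of_isUnit (hAB.isUnit_of_dvd' (h ▸ dvd_mul_left B (C q)) dvd_rfl)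
  have hA : A.natDegree = 0 := by
    rw [← Nat.le_zero, ← hB, h]; exact natDegree_C_mul_le q B
  simp [hA, hB] at hdeg

end Polynomial

lemma homEval_mk_one {f : ℂ[X]} {n : ℕ} (hf : f.natDegree ≤ n) (z : ℂ) :
    homEval f n (z, 1) = f.eval z := by
  simp [homEval, eval_eq_sum_range' (Nat.lt_succ_of_le hf)]

lemma homEval_one_mk {f : ℂ[X]} {n : ℕ} (hf : f.natDegree ≤ n) (z : ℂ) :
    homEval f n (1, z) = (reflect n f).eval z := by
  rw [homEval, eval_eq_sum_range' (natDegree_reflect_le.trans_lt (by omega) : _ < n + 1),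
    ← Finset.sum_range_reflect]
  refine Finset.sum_congr rfl fun i hi => ?_
  have hi : i ≤ n := Nat.lt_succ_iff.1 (Finset.mem_range.1 hi)
  rw [coeff_reflect, revAt_le (by omega), Nat.add_sub_cancel, Nat.sub_sub_self hi]
  simp

lemma eval_eq_mul_of_tendsto_chordalP1 {ι : Type*} {L : Filter ι} [L.NeBot] {d : ℕ} (hd : 0 < d)
    {q : ℂ} {R : ℝ} (hR : 0 < R) {A B : ℂ[X]} (hAB : ∀ z, ¬(A.eval z = 0 ∧ B.eval z = 0))
    {P Q : ι → ℂ[X]} {p c : ι → ℂ}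
    (hPQ : ∀ᶠ t in L, ∀ z, ¬((P t).eval z = 0 ∧ (Q t).eval z = 0))
    (hfix : ∀ᶠ t in L, ∀ z, (P t).eval z - p t * (Q t).eval z = c t * (z - p t) ^ d)
    (hconv : ∀ ε : ℝ, 0 < ε → ∀ᶠ t in L, ∀ z ∈ closedBall q R,
      chordalP1 ((P t).eval z, (Q t).eval z) (A.eval z, B.eval z) < ε)
    (hp : Tendsto p L (𝓝 q)) :
    B.eval q ≠ 0 ∧ A.eval q = q * B.eval q := by
  set χ := fun z : ℂ => chordalP1 (z, 1) (A.eval z, B.eval z)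
  have hχ : Tendsto (fun t => χ (p t)) L (𝓝 0) := by
    refine tendsto_order.2 ⟨fun a ha => Eventually.of_forall fun t =>
      ha.trans_le (chordalP1_nonneg _ _), fun ε hε => ?_⟩
    filter_upwards [hconv ε hε, hfix, hPQ, hp (closedBall_mem_nhds q hR)]
      with t hconvt hfixt hPQt hpt
    have hPp : (Q t).eval (p t) * p t = (P t).eval (p t) := by
      have := hfixt (p t)
      rw [sub_self, zero_pow hd.ne', mul_zero, sub_eq_zero] at this
      rw [this, mul_comm]
    have hQp : (Q t).eval (p t) ≠ 0 := fun h0 => hPQt (p t) ⟨by rw [← hPp, h0, zero_mul], h0⟩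
    have h2 := chordalP1_smul_left hQp (p t) 1 (A.eval (p t), B.eval (p t))
    rw [mul_one, hPp] at h2
    show chordalP1 (p t, 1) _ < ε
    rw [← h2]
    exact hconvt (p t) hpt
  have hχcont : ContinuousAt χ q :=
    continuousAt_chordalP1 (v := fun z => (z, 1)) (w := fun z => (A.eval z, B.eval z))
      (by fun_prop) (by fun_prop) (by simp) (hAB q)
  have hχq : χ q = 0 := tendsto_nhds_unique (hχcont.tendsto.comp hp) hχ
  simp only [χ, chordalP1, div_eq_zero_iff, norm_eq_zero, one_mul, sub_eq_zero] at hχq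
  rcases hχq with hχq | hχq
  · refine ⟨fun h0 => hAB q ⟨?_, h0⟩, hχq.symm⟩
    rw [← hχq, h0, mul_zero]
  · exact absurd hχq (mul_pos (sqrt_normSq_pos (by simp)) (sqrt_normSq_pos (hAB q))).ne'

lemma isBigO_sub_pow_of_tendstoUniformlyOn {ι : Type*} {L : Filter ι} [L.NeBot] {d : ℕ}
    {q : ℂ} {r : ℝ} (hr : 0 < r) {f v : ι → ℂ → ℂ} {φ : ℂ → ℂ} {p : ι → ℂ}
    (hφ : ContinuousOn φ (closedBall q r)) (hf : TendstoUniformlyOn f φ L (closedBall q r))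
    (hp : Tendsto p L (𝓝 q))
    (hv : ∀ᶠ t in L, DifferentiableOn ℂ (v t) (closedBall q r) ∧
      ∀ z ∈ closedBall q r, f t z - p t = v t z * (z - p t) ^ d) :
    (fun z => φ z - q) =O[𝓝 q] fun z => (z - q) ^ d := by
  obtain ⟨K, hK⟩ := (isCompact_closedBall q r).exists_bound_of_continuousOn
    (f := fun z => φ z - q) (hφ.sub continuousOn_const)
  set M := (K + 1) * (2 / r) ^ d
  have hbound : ∀ᶠ t in L, ∀ z ∈ closedBall q r, ‖f t z - p t‖ ≤ M * ‖z - p t‖ ^ d := by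
    filter_upwards [hv, Metric.tendstoUniformlyOn_iff.1 hf (1 / 2) (by norm_num),
      hp (closedBall_mem_nhds q (lt_min (half_pos hr) one_half_pos))] with t hvt hft hpt
    refine norm_sub_le_mul_pow_of_eq_mul_pow hr hvt.1 hvt.2
      ((mem_closedBall.1 hpt).trans (min_le_left _ _)) fun z hz => ?_
    have hz' := sphere_subset_closedBall hz
    have h1 : ‖φ z - f t z‖ < 1 / 2 := by rw [← dist_eq_norm]; exact hft z hz'
    have h2 : ‖φ z - q‖ ≤ K := hK z hz'
    have h3 : ‖q - p t‖ ≤ 1 / 2 := by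
      rw [← dist_eq_norm, dist_comm]; exact (mem_closedBall.1 hpt).trans (min_le_right _ _)
    calc ‖f t z - p t‖ = ‖-(φ z - f t z) + (φ z - q) + (q - p t)‖ := by ring_nf
      _ ≤ ‖φ z - f t z‖ + ‖φ z - q‖ + ‖q - p t‖ := norm_add₃_le.trans_eq (by rw [norm_neg])
      _ ≤ K + 1 := by linarith
  refine IsBigO.of_bound M (eventually_of_mem (closedBall_mem_nhds q hr) fun z hz => ?_)
  simpa using le_of_tendsto_of_tendsto (((hf.tendsto_at hz).sub hp).norm)
    (((tendsto_const_nhds.sub hp).norm.pow d).const_mul M) (hbound.mono fun t ht => ht z hz)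

theorem not_tendsto_of_natDegree_sub_C_mul_lt {ι : Type*} {L : Filter ι} [L.NeBot] {d : ℕ} {q : ℂ}
    {R : ℝ} (hR : 0 < R) {A B : ℂ[X]} (hAB : ∀ z, ¬(A.eval z = 0 ∧ B.eval z = 0))
    (hψ : A - C q * B ≠ 0) (hψd : (A - C q * B).natDegree < d)
    {P Q : ι → ℂ[X]} {p c : ι → ℂ}
    (hPQ : ∀ᶠ t in L, ∀ z, ¬((P t).eval z = 0 ∧ (Q t).eval z = 0))
    (hfix : ∀ᶠ t in L, P t - C (p t) * Q t = C (c t) * (X - C (p t)) ^ d)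
    (hconv : ∀ ε : ℝ, 0 < ε → ∀ᶠ t in L, ∀ z ∈ closedBall q R,
      chordalP1 ((P t).eval z, (Q t).eval z) (A.eval z, B.eval z) < ε) :
    ¬Tendsto p L (𝓝 q) := by
  intro hp
  have hfix' : ∀ᶠ t in L, ∀ z, (P t).eval z - p t * (Q t).eval z = c t * (z - p t) ^ d :=
    hfix.mono fun t ht z => by simpa using congrArg (eval z) ht
  have hBq := eval_eq_mul_of_tendsto_chordalP1 (by omega) hR hAB hPQ hfix' hconv hp
  obtain ⟨r, hr, hrR, hBr⟩ : ∃ r, 0 < r ∧ r ≤ R ∧ ∀ z ∈ closedBall q r, B.eval z ≠ 0 := by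
    obtain ⟨r, hr, hBr⟩ := nhds_basis_closedBall.eventually_iff.1
      (B.continuous.continuousAt.eventually_ne hBq.1)
    exact ⟨min r R, lt_min hr hR, min_le_right _ _,
      fun z hz => hBr (closedBall_subset_closedBall (min_le_left _ _) hz)⟩
  obtain ⟨hQ, hunif⟩ := tendstoUniformlyOn_div_of_chordalP1 (isCompact_closedBall q r)
    A.continuous.continuousOn B.continuous.continuousOn hBr (hPQ.mono fun t ht z _ => ht z)
    fun ε hε => (hconv ε hε).mono fun t ht z hz => ht z (closedBall_subset_closedBall hrR hz)
  have hφO := isBigO_sub_pow_of_tendstoUniformlyOn hr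
    (A.continuous.continuousOn.div B.continuous.continuousOn hBr) hunif hp
    (v := fun t z => c t / (Q t).eval z) <| by
      filter_upwards [hQ, hfix'] with t hQt hfixt
      refine ⟨(differentiableOn_const _).div (Q t).differentiableOn hQt, fun z hz => ?_⟩
      field_simp [hQt z hz]
      linear_combination hfixt z
  have hO : (fun z => (A - C q * B).eval z) =O[𝓝 q] fun z => (z - q) ^ d := by
    refine ((B.continuous.tendsto q).isBigO_one ℂ |>.mul hφO).congr' ?_ (by simp)
    filter_upwards [closedBall_mem_nhds q hr] with z hz
    simp only [eval_sub, eval_mul, eval_C, Pi.div_apply]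
    field_simp [hBr z hz]
  have hdeg := natDegree_le_of_dvd (pow_X_sub_C_dvd_of_isBigO hψ hO) hψ
  rw [(monic_X_sub_C q).natDegree_pow, natDegree_X_sub_C, mul_one] at hdeg
  omega

/-- Locally uniform convergence of `[P t : Q t]` to `[A : B]` on `ℙ¹ \ {h}` in the chordal
metric, read in homogeneous coordinates. -/
def TendstoChordalOff {ι : Type*} (L : Filter ι) (P Q : ι → ℂ[X]) (d : ℕ) (A B : ℂ[X]) (e : ℕ)
    (h : ℂ) : Prop :=
  ∀ K : Set (ℂ × ℂ), IsCompact K → (∀ v ∈ K, v ≠ ((0 : ℂ), (0 : ℂ)) ∧ v.1 ≠ h * v.2) →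
    ∀ ε : ℝ, 0 < ε → ∀ᶠ t in L, ∀ v ∈ K,
      chordalP1 (homEval (P t) d v, homEval (Q t) d v) (homEval A e v, homEval B e v) < ε

section Family

variable {ι : Type*} {L : Filter ι} {d e : ℕ} {h : ℂ} {A B : ℂ[X]} {P Q : ι → ℂ[X]} {p c : ι → ℂ}

lemma TendstoChordalOff.mono {L' : Filter ι} (hconv : TendstoChordalOff L P Q d A B e h)
    (hL : L' ≤ L) : TendstoChordalOff L' P Q d A B e h :=
  fun K hK hKh ε hε => (hconv K hK hKh ε hε).filter_mono hL

theorem not_tendsto_nhds_of_tendstoChordalOff [L.NeBot] (he : 0 < e) (hed : e < d)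
    (hAB : IsCoprime A B) (hABdeg : max A.natDegree B.natDegree = e)
    (hPQ : ∀ᶠ t in L, IsCoprime (P t) (Q t) ∧ max (P t).natDegree (Q t).natDegree = d)
    (hfix : ∀ᶠ t in L, P t - C (p t) * Q t = C (c t) * (X - C (p t)) ^ d)
    (hconv : TendstoChordalOff L P Q d A B e h) {q : ℂ} (hqh : q ≠ h) :
    ¬Tendsto p L (𝓝 q) := by
  have hR : 0 < dist q h / 2 := half_pos (dist_pos.2 hqh)
  have hA : A.natDegree ≤ e := hABdeg ▸ le_max_left _ _
  have hB : B.natDegree ≤ e := hABdeg ▸ le_max_right _ _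
  refine not_tendsto_of_natDegree_sub_C_mul_lt hR (not_eval_eq_zero_and_of_isCoprime hAB)
    (sub_C_mul_ne_zero_of_isCoprime hAB (hABdeg ▸ he) q) ?_
    (hPQ.mono fun t ht => not_eval_eq_zero_and_of_isCoprime ht.1) hfix fun ε hε => ?_
  · exact (natDegree_sub_le _ _).trans_lt
      (max_lt (hA.trans_lt hed) ((natDegree_C_mul_le _ _).trans_lt (hB.trans_lt hed)))
  have hK := hconv _ ((isCompact_closedBall q (dist q h / 2)).image (f := fun z => (z, (1 : ℂ)))
    (by fun_prop)) (Set.forall_mem_image.2 fun z hz => ⟨by simp, fun hzh => by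
      simp only [mul_one] at hzh
      rw [mem_closedBall, hzh, dist_comm] at hz
      linarith⟩) ε hε
  filter_upwards [hK, hPQ] with t ht hPQt z hz
  have := ht _ (Set.mem_image_of_mem _ hz)
  rwa [homEval_mk_one (hPQt.2 ▸ le_max_left _ _), homEval_mk_one (hPQt.2 ▸ le_max_right _ _),
    homEval_mk_one hA, homEval_mk_one hB] at this

/-- In the chart `z ↦ 1 / z` the family is `[reflect d (Q t) : reflect d (P t)]`, with totally
ramified fixed point `(p t)⁻¹`. -/
theorem not_tendsto_cobounded_of_tendstoChordalOff [L.NeBot] (he : 0 < e) (hed : e < d)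
    (hAB : IsCoprime A B) (hABdeg : max A.natDegree B.natDegree = e)
    (hPQ : ∀ᶠ t in L, IsCoprime (P t) (Q t) ∧ max (P t).natDegree (Q t).natDegree = d)
    (hfix : ∀ᶠ t in L, P t - C (p t) * Q t = C (c t) * (X - C (p t)) ^ d)
    (hconv : TendstoChordalOff L P Q d A B e h) :
    ¬Tendsto p L (cobounded ℂ) := by
  intro hp
  have hR : 0 < (‖h‖ + 1)⁻¹ := by positivity
  have hBA := sub_C_mul_ne_zero_of_isCoprime hAB.symm (max_comm A.natDegree _ ▸ hABdeg ▸ he) 0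
  rw [C_0, zero_mul, sub_zero] at hBA
  refine not_tendsto_of_natDegree_sub_C_mul_lt (d := d) (q := 0) (A := reflect e B)
    (B := reflect e A) (P := fun t => reflect d (Q t)) (Q := fun t => reflect d (P t))
    (c := fun t => -(c t * (-p t) ^ d * (p t)⁻¹)) hR
    (not_eval_reflect_eq_zero_and he hAB.symm (max_comm A.natDegree _ ▸ hABdeg))
    (by rwa [C_0, zero_mul, sub_zero, Ne, reflect_eq_zero_iff]) ?_
    (hPQ.mono fun t ht => not_eval_reflect_eq_zero_and (by omega) ht.1.symm
      (max_comm (P t).natDegree _ ▸ ht.2)) ?_ (fun ε hε => ?_) (tendsto_inv₀_cobounded.comp hp)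
  · rw [C_0, zero_mul, sub_zero]
    exact natDegree_reflect_le.trans_lt (max_lt hed ((hABdeg ▸ le_max_right _ _).trans_lt hed))
  · filter_upwards [hfix, hp (eventually_ne_cobounded 0)] with t ht hpt
    exact reflect_sub_C_mul_eq hpt ht
  have hK := hconv _ ((isCompact_closedBall 0 (‖h‖ + 1)⁻¹).image (f := fun z => ((1 : ℂ), z))
    (by fun_prop)) (Set.forall_mem_image.2 fun z hz => ⟨by simp, fun hzh => by
      have : ‖h * z‖ < 1 := by
        rw [norm_mul]
        calc ‖h‖ * ‖z‖ ≤ ‖h‖ * (‖h‖ + 1)⁻¹ := by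
              gcongr; simpa using mem_closedBall.1 hz
          _ < 1 := by rw [mul_inv_lt_iff₀ (by positivity)]; linarith
      rw [← hzh] at this
      simp at this⟩) ε hε
  filter_upwards [hK, hPQ] with t ht hPQt z hz
  have := ht _ (Set.mem_image_of_mem _ hz)
  rw [homEval_one_mk (hPQt.2 ▸ le_max_left _ _), homEval_one_mk (hPQt.2 ▸ le_max_right _ _),
    homEval_one_mk (hABdeg ▸ le_max_left _ _), homEval_one_mk (hABdeg ▸ le_max_right _ _)] at this
  exact (chordalP1_swap _ _).trans_lt this

theorem tendsto_nhds_of_tendstoChordalOff (he : 0 < e) (hed : e < d) (hAB : IsCoprime A B)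
    (hABdeg : max A.natDegree B.natDegree = e)
    (hPQ : ∀ᶠ t in L, IsCoprime (P t) (Q t) ∧ max (P t).natDegree (Q t).natDegree = d)
    (hfix : ∀ᶠ t in L, P t - C (p t) * Q t = C (c t) * (X - C (p t)) ^ d)
    (hconv : TendstoChordalOff L P Q d A B e h) :
    Tendsto p L (𝓝 h) := by
  rw [OnePoint.isOpenEmbedding_coe.isInducing.tendsto_nhds_iff]
  refine tendsto_nhds_of_unique_mapClusterPt fun x hx => ?_
  obtain ⟨U, hUL, hU⟩ := mapClusterPt_iff_ultrafilter.1 hx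
  induction x using OnePoint.rec with
  | infty =>
    rw [← tendsto_comap_iff, OnePoint.comap_coe_nhds_infty, coclosedCompact_eq_cocompact,
      ← Metric.cobounded_eq_cocompact] at hU
    exact absurd hU (not_tendsto_cobounded_of_tendstoChordalOff he hed hAB hABdeg
      (hPQ.filter_mono hUL) (hfix.filter_mono hUL) (hconv.mono hUL))
  | coe q =>
    rw [← tendsto_comap_iff, OnePoint.comap_coe_nhds] at hU
    by_contra hqh
    exact not_tendsto_nhds_of_tendstoChordalOff he hed hAB hABdeg (hPQ.filter_mono hUL)
      (hfix.filter_mono hUL) (hconv.mono hUL) (fun h' => hqh (congrArg _ h')) hU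

end Family

theorem degenerating_escape_rate_stmt14_general
    (d : ℕ) (hd : 1 < d) (h : ℂ)
    (A B : Polynomial ℂ) (hABcop : IsCoprime A B)
    (hABdeg : max A.natDegree B.natDegree = d - 1)
    (P Q : ℂ → Polynomial ℂ) (p c : ℂ → ℂ)
    (h_deg : ∀ t ∈ Metric.ball (0 : ℂ) 1 \ {0},
      IsCoprime (P t) (Q t) ∧ max (P t).natDegree (Q t).natDegree = d)
    (h_super : ∀ t ∈ Metric.ball (0 : ℂ) 1 \ {0},
      c t ≠ 0 ∧ P t - C (p t) * Q t = C (c t) * (X - C (p t)) ^ d)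
    (h_conv : ∀ K : Set (ℂ × ℂ), IsCompact K →
      (∀ v ∈ K, v ≠ ((0 : ℂ), (0 : ℂ)) ∧ v.1 ≠ h * v.2) →
      ∀ ε : ℝ, 0 < ε → ∀ᶠ t in 𝓝[Metric.ball (0 : ℂ) 1 \ {0}] (0 : ℂ), ∀ v ∈ K,
        chordalP1 (homEval (P t) d v, homEval (Q t) d v)
          (homEval A (d - 1) v, homEval B (d - 1) v) < ε) :
    Tendsto p (𝓝[Metric.ball (0 : ℂ) 1 \ {0}] (0 : ℂ)) (𝓝 h) := by
  have hmem : ∀ᶠ t in 𝓝[Metric.ball (0 : ℂ) 1 \ {0}] (0 : ℂ), t ∈ Metric.ball (0 : ℂ) 1 \ {0} :=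
    self_mem_nhdsWithin
  exact tendsto_nhds_of_tendstoChordalOff (by omega) (by omega) hABcop hABdeg
    (hmem.mono h_deg) (hmem.mono fun t ht => (h_super t ht).2) h_conv

/-- Let `f_t = P_t/Q_t` be a holomorphic family of rational maps of degree
`d > 1` on `ℙ¹`, parameterized by the punctured disk, such that each `f_t` is Möbius conjugate
to a polynomial — encoded by a totally ramified (superattracting) fixed point `p t`, i.e.
`P_t − p_t Q_t = c_t (X − p_t)^d` — and suppose `f_t → φ = A/B` of degree `d − 1` locally
uniformly on `ℙ¹ \ {h}` (in the chordal metric, via homogeneous coordinates).  Then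
`p_t → h` as `t → 0`. -/
theorem degenerating_escape_rate_stmt14
    (d : ℕ) (hd : 1 < d) (h : ℂ)
    (A B : Polynomial ℂ) (hABcop : IsCoprime A B)
    (hABdeg : max A.natDegree B.natDegree = d - 1)
    (P Q : ℂ → Polynomial ℂ) (p c : ℂ → ℂ)
    (h_hol : ∀ i : ℕ,
      DifferentiableOn ℂ (fun t => (P t).coeff i) (Metric.ball (0 : ℂ) 1 \ {0}) ∧
      DifferentiableOn ℂ (fun t => (Q t).coeff i) (Metric.ball (0 : ℂ) 1 \ {0}))
    (h_deg : ∀ t ∈ Metric.ball (0 : ℂ) 1 \ {0},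
      IsCoprime (P t) (Q t) ∧ max (P t).natDegree (Q t).natDegree = d)
    (h_super : ∀ t ∈ Metric.ball (0 : ℂ) 1 \ {0},
      c t ≠ 0 ∧ P t - C (p t) * Q t = C (c t) * (X - C (p t)) ^ d)
    (h_conv : ∀ K : Set (ℂ × ℂ), IsCompact K →
      (∀ v ∈ K, v ≠ ((0 : ℂ), (0 : ℂ)) ∧ v.1 ≠ h * v.2) →
      ∀ ε : ℝ, 0 < ε → ∀ᶠ t in 𝓝[Metric.ball (0 : ℂ) 1 \ {0}] (0 : ℂ), ∀ v ∈ K,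
        chordalP1 (homEval (P t) d v, homEval (Q t) d v)
          (homEval A (d - 1) v, homEval B (d - 1) v) < ε) :
    Tendsto p (𝓝[Metric.ball (0 : ℂ) 1 \ {0}] (0 : ℂ)) (𝓝 h) :=
  degenerating_escape_rate_stmt14_general d hd h A B hABcop hABdeg P Q p c h_deg h_super h_conv
end
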